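/- arXiv:1809.05952 — 2 statements merged into one kernel-verified Lean document; each statement's English description precedes it below -/
import Mathlib

section
/- The 3-parameters p-star Hamiltonian satisfies the Markov property: for any two pairs of distinct indices {i,j} and {k,l} with {i,j} ∩ {k,l} = ∅, and any two configurations X, Y ∈ Ω_n that agree on all entries except possibly the entries (k,l) and (l,k), the difference of Hamiltonians obtained by switching the edge (i,j) is the same in both: H(X⁺_ij) − H(X⁻_ij) = H(Y⁺_ij) − H(Y⁻_ij), where Z⁺_ij (resp. Z⁻_ij) denotes Z with entries (i,j) and (j,i) set to 1 (resp. 0). -/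
/-- Number of edges `E(X) = ∑_{i<j} X_ij`. -/
def numEdges {n : ℕ} (X : Fin n → Fin n → Bool) : ℕ :=
  ∑ i, ∑ j, if i < j then (X i j).toNat else 0

/-- Number of 2-stars `S2(X) = ∑_k ∑_{i<j, i≠k, j≠k} X_ik X_kj`. -/
def numTwoStars {n : ℕ} (X : Fin n → Fin n → Bool) : ℕ :=
  ∑ k, ∑ i, ∑ j, if i < j ∧ i ≠ k ∧ j ≠ k then (X i k).toNat * (X k j).toNat else 0

/-- Number of triangles `T(X) = ∑_{i<j<k} X_ij X_jk X_ki`. -/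
def numTriangles {n : ℕ} (X : Fin n → Fin n → Bool) : ℕ :=
  ∑ i, ∑ j, ∑ k, if i < j ∧ j < k then (X i j).toNat * ((X j k).toNat * (X k i).toNat) else 0

/-- The 3-parameters p-star Hamiltonian `H(X) = θ E(X) + σ S2(X) − α T(X)`. -/
def hamiltonian {n : ℕ} (θ σ α : ℝ) (X : Fin n → Fin n → Bool) : ℝ :=
  θ * numEdges X + σ * numTwoStars X - α * numTriangles X

/-- `setEdge X i j b` is the configuration equal to `X` except that the symmetric
entries `(i,j)` and `(j,i)` are set to `b`. -/
def setEdge {n : ℕ} (X : Fin n → Fin n → Bool) (i j : Fin n) (b : Bool) :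
    Fin n → Fin n → Bool :=
  fun a c => if (a = i ∧ c = j) ∨ (a = j ∧ c = i) then b else X a c

/-!
Switching the edge `{i,j}` changes a sum of monomials in the entries only through the monomials
that contain the entry `(i,j)`. For edges, 2-stars and triangles such a monomial is connected, so
all of its entries lie in a row or column `i` or `j`; these entries avoid `{k,l}`, where `X` and
`Y` agree.
-/

namespace PStar

variable {n : ℕ}

def IsEdgeAt (i j : Fin n) (p : Fin n × Fin n) : Prop :=
  (p.1 = i ∧ p.2 = j) ∨ (p.1 = j ∧ p.2 = i)

def Touches (i j : Fin n) (p : Fin n × Fin n) : Prop :=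
  p.1 = i ∨ p.1 = j ∨ p.2 = i ∨ p.2 = j

def AgreeNear (i j : Fin n) (X Y : Fin n → Fin n → Bool) : Prop :=
  ∀ p, Touches i j p → X p.1 p.2 = Y p.1 p.2

def flipDiff (F : (Fin n → Fin n → Bool) → ℝ) (i j : Fin n) (X : Fin n → Fin n → Bool) : ℝ :=
  F (setEdge X i j true) - F (setEdge X i j false)

def monomial (ps : List (Fin n × Fin n)) (Z : Fin n → Fin n → Bool) : ℝ :=
  (ps.map fun p => ((Z p.1 p.2).toNat : ℝ)).prod

section flipDiff

variable {ι : Type*} {i j : Fin n} {X Y : Fin n → Fin n → Bool}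

theorem flipDiff_sum (s : Finset ι) (f : ι → (Fin n → Fin n → Bool) → ℝ) :
    flipDiff (fun Z => ∑ x ∈ s, f x Z) i j X = ∑ x ∈ s, flipDiff (f x) i j X :=
  (Finset.sum_sub_distrib ..).symm

theorem flipDiff_ite (c : Prop) [Decidable c] (F : (Fin n → Fin n → Bool) → ℝ) :
    flipDiff (fun Z => if c then F Z else 0) i j X = if c then flipDiff F i j X else 0 := by
  split_ifs <;> simp [flipDiff]

theorem setEdge_apply_of_not_isEdgeAt {p : Fin n × Fin n} (hp : ¬IsEdgeAt i j p) (b : Bool) :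
    setEdge X i j b p.1 p.2 = X p.1 p.2 :=
  if_neg hp

theorem setEdge_apply_eq_of_agreeNear (h : AgreeNear i j X Y) {p : Fin n × Fin n}
    (hp : Touches i j p) (b : Bool) : setEdge X i j b p.1 p.2 = setEdge Y i j b p.1 p.2 := by
  unfold setEdge
  split_ifs
  · rfl
  · exact h p hp

theorem flipDiff_monomial_eq (h : AgreeNear i j X Y) {ps : List (Fin n × Fin n)}
    (hps : ∀ p ∈ ps, IsEdgeAt i j p → ∀ q ∈ ps, Touches i j q) :
    flipDiff (monomial ps) i j X = flipDiff (monomial ps) i j Y := by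
  by_cases hedge : ∃ p ∈ ps, IsEdgeAt i j p
  · obtain ⟨p, hp, hpe⟩ := hedge
    have hXY : ∀ b, monomial ps (setEdge X i j b) = monomial ps (setEdge Y i j b) := fun b =>
      congrArg List.prod <| List.map_congr_left fun q hq => by
        rw [setEdge_apply_eq_of_agreeNear h (hps p hp hpe q hq)]
    simp only [flipDiff, hXY]
  · push Not at hedge
    have hflip : ∀ Z b, monomial ps (setEdge Z i j b) = monomial ps Z := fun Z b =>
      congrArg List.prod <| List.map_congr_left fun q hq => by
        rw [setEdge_apply_of_not_isEdgeAt (hedge q hq)]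
    simp only [flipDiff, hflip, sub_self]

end flipDiff

section counts

variable {i j : Fin n} {X Y : Fin n → Fin n → Bool}

theorem numEdges_eq_sum_monomial (Z : Fin n → Fin n → Bool) :
    (numEdges Z : ℝ) = ∑ a, ∑ b, if a < b then monomial [(a, b)] Z else 0 := by
  simp [numEdges, monomial]

theorem numTwoStars_eq_sum_monomial (Z : Fin n → Fin n → Bool) :
    (numTwoStars Z : ℝ) =
      ∑ m, ∑ a, ∑ b, if a < b ∧ a ≠ m ∧ b ≠ m then monomial [(a, m), (m, b)] Z else 0 := by
  simp [numTwoStars, monomial]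

theorem numTriangles_eq_sum_monomial (Z : Fin n → Fin n → Bool) :
    (numTriangles Z : ℝ) =
      ∑ a, ∑ b, ∑ c, if a < b ∧ b < c then monomial [(a, b), (b, c), (c, a)] Z else 0 := by
  simp [numTriangles, monomial]

theorem flipDiff_numEdges_eq (h : AgreeNear i j X Y) :
    flipDiff (fun Z => (numEdges Z : ℝ)) i j X = flipDiff (fun Z => (numEdges Z : ℝ)) i j Y := by
  simp only [numEdges_eq_sum_monomial, flipDiff_sum, flipDiff_ite]
  congr! 3
  exact flipDiff_monomial_eq h <| by
    simp only [List.mem_cons, List.not_mem_nil, or_false, IsEdgeAt, Touches, forall_eq]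
    tauto

theorem flipDiff_numTwoStars_eq (h : AgreeNear i j X Y) :
    flipDiff (fun Z => (numTwoStars Z : ℝ)) i j X =
      flipDiff (fun Z => (numTwoStars Z : ℝ)) i j Y := by
  simp only [numTwoStars_eq_sum_monomial, flipDiff_sum, flipDiff_ite]
  congr! 4
  exact flipDiff_monomial_eq h <| by
    simp only [List.mem_cons, List.not_mem_nil, or_false, IsEdgeAt, Touches, forall_eq_or_imp,
      forall_eq]
    tauto

theorem flipDiff_numTriangles_eq (h : AgreeNear i j X Y) :
    flipDiff (fun Z => (numTriangles Z : ℝ)) i j X =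
      flipDiff (fun Z => (numTriangles Z : ℝ)) i j Y := by
  simp only [numTriangles_eq_sum_monomial, flipDiff_sum, flipDiff_ite]
  congr! 4
  exact flipDiff_monomial_eq h <| by
    simp only [List.mem_cons, List.not_mem_nil, or_false, IsEdgeAt, Touches, forall_eq_or_imp,
      forall_eq]
    tauto

theorem flipDiff_hamiltonian (θ σ α : ℝ) :
    flipDiff (hamiltonian θ σ α) i j X =
      θ * flipDiff (fun Z => (numEdges Z : ℝ)) i j X
        + σ * flipDiff (fun Z => (numTwoStars Z : ℝ)) i j X
        - α * flipDiff (fun Z => (numTriangles Z : ℝ)) i j X := by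
  simp only [flipDiff, hamiltonian]
  ring

theorem agreeNear_of_eq_off_isEdgeAt {k l : Fin n} (hik : i ≠ k) (hil : i ≠ l) (hjk : j ≠ k)
    (hjl : j ≠ l) (h : ∀ a b, ¬IsEdgeAt k l (a, b) → X a b = Y a b) : AgreeNear i j X Y :=
  fun p hp => h p.1 p.2 <| by
    unfold IsEdgeAt
    unfold Touches at hp
    aesop

end counts

end PStar

open PStar in
theorem stmt_9_general {n : ℕ} (θ σ α : ℝ) (i j k l : Fin n)
    (hik : i ≠ k) (hil : i ≠ l) (hjk : j ≠ k) (hjl : j ≠ l)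
    (X Y : Fin n → Fin n → Bool)
    (hagree : ∀ a b, ¬((a = k ∧ b = l) ∨ (a = l ∧ b = k)) → X a b = Y a b) :
    hamiltonian θ σ α (setEdge X i j true) - hamiltonian θ σ α (setEdge X i j false)
      = hamiltonian θ σ α (setEdge Y i j true) - hamiltonian θ σ α (setEdge Y i j false) := by
  have hnear : AgreeNear i j X Y := agreeNear_of_eq_off_isEdgeAt hik hil hjk hjl hagree
  change flipDiff (hamiltonian θ σ α) i j X = flipDiff (hamiltonian θ σ α) i j Y
  rw [flipDiff_hamiltonian, flipDiff_hamiltonian, flipDiff_numEdges_eq hnear,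
    flipDiff_numTwoStars_eq hnear, flipDiff_numTriangles_eq hnear]

/-- The 3-parameters p-star Hamiltonian satisfies the Markov property:
for disjoint pairs `{i,j}` and `{k,l}` and configurations `X, Y` agreeing everywhere
except possibly at entries `(k,l)` and `(l,k)`, the difference of Hamiltonians obtained
by switching the edge `(i,j)` is the same in both configurations. -/
theorem stmt_9 {n : ℕ} (hn : 4 ≤ n) (θ σ α : ℝ) (i j k l : Fin n)
    (hij : i ≠ j) (hkl : k ≠ l)
    (hik : i ≠ k) (hil : i ≠ l) (hjk : j ≠ k) (hjl : j ≠ l)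
    (X Y : Fin n → Fin n → Bool)
    (hXsymm : ∀ a b, X a b = X b a) (hXdiag : ∀ a, X a a = false)
    (hYsymm : ∀ a b, Y a b = Y b a) (hYdiag : ∀ a, Y a a = false)
    (hagree : ∀ a b, ¬((a = k ∧ b = l) ∨ (a = l ∧ b = k)) → X a b = Y a b) :
    hamiltonian θ σ α (setEdge X i j true) - hamiltonian θ σ α (setEdge X i j false)
      = hamiltonian θ σ α (setEdge Y i j true) - hamiltonian θ σ α (setEdge Y i j false) :=
  stmt_9_general θ σ α i j k l hik hil hjk hjl X Y hagree
end

section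
/- Under the 3-parameters p-star model, for any distinct indices i ≠ j, the expectation of the edge indicator satisfies the exact identity E_P[X_ij] = E_P[ 1 / ( exp( θ + σ ∑_{l≠i,j} X_il + σ ∑_{l≠i,j} X_jl − α ∑_{l≠i,j} X_il X_jl ) + 1 ) ], where both expectations are taken with respect to the probability mass function P on Ω_n. -/
/-- `Ω_n`: the finite set of symmetric zero-one configurations with zero diagonal
(simple graphs on `n` labeled vertices). -/
def graphConfigs (n : ℕ) : Finset (Fin n → Fin n → Bool) :=
  Finset.univ.filter (fun X => (∀ a b, X a b = X b a) ∧ ∀ a, X a a = false)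

/-!
Toggling the edge `ij` is an involution of `Ω_n`. If `X_ij = 0`, adding the edge raises `H` by
exactly `Δ = θ + σ (d_i + d_j) − α c_ij`, where `d_i, d_j` are the degrees of `i, j` and `c_ij`
their number of common neighbours in `X`. As sums over `l ≠ i, j` these do not involve `X_ij`, so
`Δ` is the same for `X` and `X + ij`. Hence `P(X + ij) = e^{-Δ} P(X)`, and on each toggle pair both
`P X_ij` and `P / (e^Δ + 1)` sum to `P(X + ij)`.
The increment `Δ` is read off from `2E = ∑ d_k`, `2 S₂ = ∑ d_k (d_k − 1)`, `6T = tr A³` and the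
expansion of `tr (A + E)³` for `E = e_ij + e_ji`.
-/

open Finset Matrix

section SymmetricSums

variable {ι M : Type*} [Fintype ι] [LinearOrder ι] [AddCommMonoid M]

theorem sum_sum_eq_two_nsmul_sum_sum_lt_add (g : ι → ι → M) (hg : ∀ a b, g a b = g b a) :
    ∑ a, ∑ b, g a b = 2 • (∑ a, ∑ b, if a < b then g a b else 0) + ∑ a, g a a := by
  have split (a b : ι) : g a b = ((if a < b then g a b else 0) + if b < a then g b a else 0)
      + if a = b then g a b else 0 := by
    rcases lt_trichotomy a b with h | rfl | h
    · simp [h, h.ne, h.not_gt]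
    · simp
    · simp [h, h.ne', h.not_gt, hg a b]
  calc ∑ a, ∑ b, g a b
      = ∑ a, ∑ b, (((if a < b then g a b else 0) + if b < a then g b a else 0)
          + if a = b then g a b else 0) :=
        sum_congr rfl fun a _ => sum_congr rfl fun b _ => split a b
    _ = (∑ a, ∑ b, if a < b then g a b else 0) + (∑ b, ∑ a, if b < a then g b a else 0)
          + ∑ a, g a a := by
        simp only [sum_add_distrib, sum_ite_eq, mem_univ, if_true]
        rw [sum_comm (f := fun a b => if b < a then g b a else 0)]
    _ = _ := by rw [two_nsmul]

theorem sum_sum_sum_eq_six_nsmul (h : ι → ι → ι → M) (h_swap : ∀ a b c, h a b c = h a c b)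
    (h_cycle : ∀ a b c, h a b c = h b c a) (h_diag : ∀ a b, h a b b = 0) :
    ∑ a, ∑ b, ∑ c, h a b c = 6 • ∑ a, ∑ b, ∑ c, if a < b ∧ b < c then h a b c else 0 := by
  have h_diag' (a c : ι) : h a a c = 0 := by rw [← h_cycle c a a, h_diag]
  have split (a b c : ι) : (if b < c then h a b c else 0) =
      ((if a < b ∧ b < c then h a b c else 0) + if b < a ∧ a < c then h a b c else 0)
        + if b < c ∧ c < a then h a b c else 0 := by
    rcases eq_or_ne a b with rfl | hab
    · simp [h_diag']
    rcases eq_or_ne a c with rfl | hac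
    · simp [h_cycle a b a, h_diag]
    split_ifs <;> grind
  set T := ∑ a, ∑ b, ∑ c, if a < b ∧ b < c then h a b c else 0
  have middle : (∑ a, ∑ b, ∑ c, if b < a ∧ a < c then h a b c else 0) = T := by
    rw [sum_comm]
    exact sum_congr rfl fun b _ => sum_congr rfl fun a _ => sum_congr rfl fun c _ => by
      rw [h_cycle b a c, h_swap]
  have last : (∑ a, ∑ b, ∑ c, if b < c ∧ c < a then h a b c else 0) = T := by
    rw [sum_comm]
    refine sum_congr rfl fun b _ => ?_
    rw [sum_comm]
    exact sum_congr rfl fun c _ => sum_congr rfl fun a _ => by rw [h_cycle]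
  calc ∑ a, ∑ b, ∑ c, h a b c
      = ∑ a, 2 • ∑ b, ∑ c, if b < c then h a b c else 0 := by
        refine sum_congr rfl fun a _ => ?_
        rw [sum_sum_eq_two_nsmul_sum_sum_lt_add _ (h_swap a), sum_eq_zero fun b _ => h_diag a b,
          add_zero]
    _ = 2 • (T + (∑ a, ∑ b, ∑ c, if b < a ∧ a < c then h a b c else 0)
          + ∑ a, ∑ b, ∑ c, if b < c ∧ c < a then h a b c else 0) := by
        simp only [← smul_sum, split, sum_add_distrib]
        rfl
    _ = 6 • T := by rw [middle, last]; abel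

end SymmetricSums

theorem sum_ite_ne_and_ne_eq_sum {ι M : Type*} [Fintype ι] [DecidableEq ι] [AddCommMonoid M]
    {f : ι → M} {i j : ι} (hi : f i = 0) (hj : f j = 0) :
    ∑ l, (if l ≠ i ∧ l ≠ j then f l else 0) = ∑ l, f l :=
  sum_congr rfl fun l _ => by
    rcases eq_or_ne l i with rfl | hli
    · simp [hi]
    rcases eq_or_ne l j with rfl | hlj
    · simp [hj]
    simp [hli, hlj]

theorem trace_add_single_add_single_cube {ι R : Type*} [Fintype ι] [DecidableEq ι] [CommRing R]
    (A : Matrix ι ι R) {i j : ι} (hij : i ≠ j) :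
    trace ((A + (single i j 1 + single j i 1)) * (A + (single i j 1 + single j i 1))
      * (A + (single i j 1 + single j i 1)))
      = trace (A * A * A) + 3 * ((A * A) i j + (A * A) j i) + 3 * (A i i + A j j) := by
  set E : Matrix ι ι R := single i j 1 + single j i 1 with hE
  have hEE : E * E = single i i 1 + single j j 1 := by
    simp [hE, add_mul, mul_add, hij, hij.symm, add_comm]
  have hEEE : trace (E * E * E) = 0 := by
    simp [hE, add_mul, mul_add, hij, hij.symm]
  have hAAE : trace (A * A * E) = (A * A) j i + (A * A) i j := by
    simp [hE, mul_add, trace_mul_single]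
  have hAAEE : trace (A * E * E) = A i i + A j j := by
    simp [Matrix.mul_assoc, hEE, mul_add, trace_mul_single]
  simp only [add_mul, mul_add, trace_add]
  rw [trace_mul_cycle E A A, trace_mul_cycle A E A, trace_mul_cycle E A E, trace_mul_cycle E E A,
    hAAE, hAAEE, hEEE]
  ring

section Toggle

variable {V : Type*} [DecidableEq V]

def toggle (i j : V) (X : V → V → Bool) : V → V → Bool :=
  fun a b => if s(a, b) = s(i, j) then !X a b else X a b

theorem toggle_toggle (i j : V) (X : V → V → Bool) : toggle i j (toggle i j X) = X := by
  funext a b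
  unfold toggle
  split_ifs <;> simp

theorem toggle_apply_self (i j : V) (X : V → V → Bool) : toggle i j X i j = !X i j :=
  if_pos rfl

theorem toggle_ne (i j : V) (X : V → V → Bool) : toggle i j X ≠ X := fun h => by
  simpa [toggle_apply_self] using congrFun (congrFun h i) j

theorem toggle_apply_of_ne {i j a b : V} (X : V → V → Bool) (h : s(a, b) ≠ s(i, j)) :
    toggle i j X a b = X a b :=
  if_neg h

theorem toggle_mem_graphConfigs {n : ℕ} {i j : Fin n} (hij : i ≠ j) {X : Fin n → Fin n → Bool}
    (hX : X ∈ graphConfigs n) : toggle i j X ∈ graphConfigs n := by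
  simp only [graphConfigs, mem_filter, mem_univ, true_and] at hX ⊢
  refine ⟨fun a b => ?_, fun a => ?_⟩
  · simp only [toggle, Sym2.eq_swap (a := a), hX.1 a b]
  · refine (toggle_apply_of_ne X ?_).trans (hX.2 a)
    rw [Ne, Sym2.eq_iff]
    rintro (⟨rfl, rfl⟩ | ⟨rfl, rfl⟩) <;> exact hij rfl

end Toggle

section AdjacencyMatrix

variable {V : Type*} [DecidableEq V]

def adjMatrix (X : V → V → Bool) : Matrix V V ℝ := Matrix.of fun a b => ((X a b).toNat : ℝ)

def degree [Fintype V] (X : V → V → Bool) (a : V) : ℝ := ∑ b, adjMatrix X a b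

theorem adjMatrix_toggle {i j : V} (hij : i ≠ j) {X : V → V → Bool} (hXij : X i j = false)
    (hXji : X j i = false) :
    adjMatrix (toggle i j X) = adjMatrix X + (single i j 1 + single j i 1) := by
  ext a b
  by_cases h : s(a, b) = s(i, j)
  · rcases Sym2.eq_iff.mp h with ⟨rfl, rfl⟩ | ⟨rfl, rfl⟩ <;>
      simp [adjMatrix, toggle, hXij, hXji, hij, hij.symm]
  · rw [Sym2.eq_iff] at h
    simp only [adjMatrix, toggle, Sym2.eq_iff, if_neg h, Matrix.add_apply, of_apply, single_apply]
    grind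

theorem degree_toggle [Fintype V] {i j : V} (hij : i ≠ j) {X : V → V → Bool} (hXij : X i j = false)
    (hXji : X j i = false) (a : V) :
    degree (toggle i j X) a = degree X a + ((if a = i then 1 else 0) + if a = j then 1 else 0) := by
  simp [degree, adjMatrix_toggle hij hXij hXji, sum_add_distrib, single_apply, ite_and, eq_comm]

end AdjacencyMatrix

section Statistics

variable {n : ℕ} {X : Fin n → Fin n → Bool}

theorem adjMatrix_comm (hsym : ∀ a b, X a b = X b a) (a b : Fin n) :
    adjMatrix X a b = adjMatrix X b a := by
  simp [adjMatrix, hsym a b]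

theorem adjMatrix_apply_self (hdiag : ∀ a, X a a = false) (a : Fin n) : adjMatrix X a a = 0 := by
  simp [adjMatrix, hdiag a]

theorem two_mul_numEdges (hsym : ∀ a b, X a b = X b a) (hdiag : ∀ a, X a a = false) :
    2 * (numEdges X : ℝ) = ∑ a, degree X a := by
  have cast : (numEdges X : ℝ) = ∑ a, ∑ b, if a < b then adjMatrix X a b else 0 := by
    simp [numEdges, adjMatrix]
  have h := sum_sum_eq_two_nsmul_sum_sum_lt_add (adjMatrix X) (adjMatrix_comm hsym)
  simp only [adjMatrix_apply_self hdiag, sum_const_zero, add_zero, nsmul_eq_mul,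
    Nat.cast_ofNat] at h
  rw [cast, ← h]
  rfl

theorem adjMatrix_mul_self (a b : Fin n) : adjMatrix X a b * adjMatrix X a b = adjMatrix X a b := by
  cases h : X a b <;> simp [adjMatrix, h]

theorem two_mul_numTwoStars (hsym : ∀ a b, X a b = X b a) (hdiag : ∀ a, X a a = false) :
    2 * (numTwoStars X : ℝ) = ∑ k, (degree X k ^ 2 - degree X k) := by
  have cast : (numTwoStars X : ℝ)
      = ∑ k, ∑ a, ∑ b, if a < b then adjMatrix X a k * adjMatrix X k b else 0 := by
    simp only [numTwoStars]
    push_cast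
    refine sum_congr rfl fun k _ => sum_congr rfl fun a _ => sum_congr rfl fun b _ => ?_
    rcases eq_or_ne a k with rfl | hak
    · simp [adjMatrix, hdiag]
    rcases eq_or_ne b k with rfl | hbk
    · simp [adjMatrix, hdiag]
    simp [adjMatrix, hak, hbk]
  have per_vertex (k : Fin n) :
      2 * ∑ a, ∑ b, (if a < b then adjMatrix X a k * adjMatrix X k b else 0)
        = degree X k ^ 2 - degree X k := by
    have h := sum_sum_eq_two_nsmul_sum_sum_lt_add
      (fun a b => adjMatrix X a k * adjMatrix X k b) fun a b => by
      rw [adjMatrix_comm hsym a k, adjMatrix_comm hsym k b, mul_comm]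
    have square : ∑ a, ∑ b, adjMatrix X a k * adjMatrix X k b = degree X k ^ 2 := by
      simp only [← mul_sum, ← sum_mul, degree, sq, adjMatrix_comm hsym _ k]
    have diag : ∑ a, adjMatrix X a k * adjMatrix X k a = degree X k := by
      simp only [adjMatrix_comm hsym _ k, adjMatrix_mul_self, degree]
    rw [square, diag, nsmul_eq_mul, Nat.cast_ofNat] at h
    linarith
  rw [cast, mul_sum]
  exact sum_congr rfl fun k _ => per_vertex k

theorem six_mul_numTriangles (hsym : ∀ a b, X a b = X b a) (hdiag : ∀ a, X a a = false) :
    6 * (numTriangles X : ℝ) = trace (adjMatrix X * adjMatrix X * adjMatrix X) := by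
  have cast : (numTriangles X : ℝ) = ∑ a, ∑ b, ∑ c, if a < b ∧ b < c then
      adjMatrix X a b * (adjMatrix X b c * adjMatrix X c a) else 0 := by
    simp [numTriangles, adjMatrix]
  have trace_cube : trace (adjMatrix X * adjMatrix X * adjMatrix X)
      = ∑ a, ∑ b, ∑ c, adjMatrix X a b * (adjMatrix X b c * adjMatrix X c a) := by
    simp only [Matrix.mul_assoc, trace, diag_apply, mul_apply, mul_sum]
  rw [trace_cube, sum_sum_sum_eq_six_nsmul, cast, nsmul_eq_mul, Nat.cast_ofNat]
  · intro a b c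
    rw [adjMatrix_comm hsym a c, adjMatrix_comm hsym c b, adjMatrix_comm hsym b a]
    ring
  · intro a b c
    ring
  · intro a b
    rw [adjMatrix_apply_self hdiag, zero_mul, mul_zero]

end Statistics

section EdgeToggle

variable {n : ℕ} {X : Fin n → Fin n → Bool} {i j : Fin n}

def edgeEnergy (θ σ α : ℝ) (X : Fin n → Fin n → Bool) (i j : Fin n) : ℝ :=
  θ + σ * (∑ l, if l ≠ i ∧ l ≠ j then ((X i l).toNat : ℝ) else 0)
    + σ * (∑ l, if l ≠ i ∧ l ≠ j then ((X j l).toNat : ℝ) else 0)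
    - α * (∑ l, if l ≠ i ∧ l ≠ j then ((X i l).toNat : ℝ) * ((X j l).toNat : ℝ) else 0)

theorem edgeEnergy_toggle (θ σ α : ℝ) :
    edgeEnergy θ σ α (toggle i j X) i j = edgeEnergy θ σ α X i j := by
  have row (r l : Fin n) (hr : r = i ∨ r = j) (hl : l ≠ i ∧ l ≠ j) : toggle i j X r l = X r l := by
    refine toggle_apply_of_ne X ?_
    rw [Ne, Sym2.eq_iff]
    omega
  simp +contextual [edgeEnergy, row]

theorem edgeEnergy_eq_of_adj_eq_false (θ σ α : ℝ) (hsym : ∀ a b, X a b = X b a)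
    (hdiag : ∀ a, X a a = false) (hX : X i j = false) :
    edgeEnergy θ σ α X i j
      = θ + σ * degree X i + σ * degree X j - α * (adjMatrix X * adjMatrix X) i j := by
  have hX' : X j i = false := hsym i j ▸ hX
  simp only [edgeEnergy, degree, mul_apply, adjMatrix_comm hsym _ j]
  rw [sum_ite_ne_and_ne_eq_sum (by simp [hdiag]) (by simp [hX]),
    sum_ite_ne_and_ne_eq_sum (by simp [hX']) (by simp [hdiag]),
    sum_ite_ne_and_ne_eq_sum (by simp [hdiag]) (by simp [hdiag])]
  rfl

theorem hamiltonian_toggle (θ σ α : ℝ) (hij : i ≠ j) (hX : X ∈ graphConfigs n)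
    (hXij : X i j = false) :
    hamiltonian θ σ α (toggle i j X) = hamiltonian θ σ α X + edgeEnergy θ σ α X i j := by
  have hX' := toggle_mem_graphConfigs hij hX
  simp only [graphConfigs, mem_filter, mem_univ, true_and] at hX hX'
  obtain ⟨hsym, hdiag⟩ := hX
  obtain ⟨hsym', hdiag'⟩ := hX'
  have hXji : X j i = false := hsym i j ▸ hXij
  have edges : 2 * (numEdges (toggle i j X) : ℝ) = 2 * numEdges X + 2 := by
    rw [two_mul_numEdges hsym hdiag, two_mul_numEdges hsym' hdiag']
    simp only [degree_toggle hij hXij hXji, sum_add_distrib, sum_ite_eq', mem_univ, if_true]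
    ring
  have twoStars : 2 * (numTwoStars (toggle i j X) : ℝ)
      = 2 * numTwoStars X + 2 * (degree X i + degree X j) := by
    have vertex (k : Fin n) : degree (toggle i j X) k ^ 2 - degree (toggle i j X) k
        = degree X k ^ 2 - degree X k
          + ((if k = i then 2 * degree X i else 0) + if k = j then 2 * degree X j else 0) := by
      rw [degree_toggle hij hXij hXji]
      rcases eq_or_ne k i with rfl | hki
      · simp only [if_true, hij, if_false, add_zero]
        ring
      rcases eq_or_ne k j with rfl | hkj
      · simp only [if_true, hki, if_false, zero_add]
        ring
      simp [hki, hkj]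
    rw [two_mul_numTwoStars hsym hdiag, two_mul_numTwoStars hsym' hdiag']
    simp only [vertex, sum_add_distrib, sum_ite_eq', mem_univ, if_true]
    ring
  have triangles : 6 * (numTriangles (toggle i j X) : ℝ)
      = 6 * numTriangles X + 6 * (adjMatrix X * adjMatrix X) i j := by
    rw [six_mul_numTriangles hsym hdiag, six_mul_numTriangles hsym' hdiag',
      adjMatrix_toggle hij hXij hXji, trace_add_single_add_single_cube _ hij]
    have hji : (adjMatrix X * adjMatrix X) j i = (adjMatrix X * adjMatrix X) i j := by
      simp only [mul_apply]
      exact sum_congr rfl fun l _ => by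
        rw [adjMatrix_comm hsym j l, adjMatrix_comm hsym l i, mul_comm]
    rw [hji, adjMatrix_apply_self hdiag, adjMatrix_apply_self hdiag]
    ring
  rw [edgeEnergy_eq_of_adj_eq_false θ σ α hsym hdiag hXij]
  unfold hamiltonian
  linear_combination (θ / 2) * edges + (σ / 2) * twoStars - (α / 6) * triangles

end EdgeToggle

section Gibbs

variable {n : ℕ} {θ σ α : ℝ} {P : (Fin n → Fin n → Bool) → ℝ} {X : Fin n → Fin n → Bool}
  {i j : Fin n}

theorem gibbs_toggle (hP : ∀ X, P X = Real.exp (-(hamiltonian θ σ α X))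
      / ∑ Y ∈ graphConfigs n, Real.exp (-(hamiltonian θ σ α Y)))
    (hij : i ≠ j) (hX : X ∈ graphConfigs n) (hXij : X i j = false) :
    P (toggle i j X) * Real.exp (edgeEnergy θ σ α X i j) = P X := by
  rw [hP, hP, hamiltonian_toggle θ σ α hij hX hXij, div_mul_eq_mul_div, ← Real.exp_add]
  ring_nf

theorem gibbs_toggle_pair_cancel (hP : ∀ X, P X = Real.exp (-(hamiltonian θ σ α X))
      / ∑ Y ∈ graphConfigs n, Real.exp (-(hamiltonian θ σ α Y)))
    (hij : i ≠ j) (hX : X ∈ graphConfigs n) (hXij : X i j = false) :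
    (P X * ((X i j).toNat : ℝ) - P X * (1 / (Real.exp (edgeEnergy θ σ α X i j) + 1)))
      + (P (toggle i j X) * ((toggle i j X i j).toNat : ℝ)
        - P (toggle i j X) * (1 / (Real.exp (edgeEnergy θ σ α (toggle i j X) i j) + 1))) = 0 := by
  rw [← gibbs_toggle hP hij hX hXij, edgeEnergy_toggle, toggle_apply_self, hXij]
  simp only [Bool.not_false, Bool.toNat_true, Bool.toNat_false, Nat.cast_one, Nat.cast_zero]
  field_simp
  ring

end Gibbs

theorem stmt_14_general {n : ℕ} (θ σ α : ℝ)
    (P : (Fin n → Fin n → Bool) → ℝ)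
    (hP : ∀ X, P X = Real.exp (-(hamiltonian θ σ α X))
      / ∑ Y ∈ graphConfigs n, Real.exp (-(hamiltonian θ σ α Y)))
    (i j : Fin n) (hij : i ≠ j) :
    ∑ X ∈ graphConfigs n, P X * ((X i j).toNat : ℝ)
      = ∑ X ∈ graphConfigs n, P X *
          (1 / (Real.exp (θ
              + σ * (∑ l, if l ≠ i ∧ l ≠ j then ((X i l).toNat : ℝ) else 0)
              + σ * (∑ l, if l ≠ i ∧ l ≠ j then ((X j l).toNat : ℝ) else 0)
              - α * (∑ l, if l ≠ i ∧ l ≠ j then ((X i l).toNat : ℝ) * ((X j l).toNat : ℝ) else 0))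
            + 1)) := by
  rw [← sub_eq_zero, ← sum_sub_distrib]
  refine sum_involution (fun X _ => toggle i j X) (fun X hX => ?_) (fun X _ _ => toggle_ne i j X)
    (fun X hX => toggle_mem_graphConfigs hij hX) (fun X _ => toggle_toggle i j X)
  rcases Bool.eq_false_or_eq_true (X i j) with hXij | hXij
  · have pair := gibbs_toggle_pair_cancel hP hij (toggle_mem_graphConfigs hij hX)
      (by rw [toggle_apply_self, hXij, Bool.not_true])
    rw [toggle_toggle, add_comm] at pair
    exact pair
  · exact gibbs_toggle_pair_cancel hP hij hX hXij

/-- Under the 3-parameters p-star model, for `i ≠ j`, the expectation of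
the edge indicator satisfies
`E_P[X_ij] = E_P[1/(exp(θ + σ∑_{l≠i,j}X_il + σ∑_{l≠i,j}X_jl − α∑_{l≠i,j}X_il X_jl) + 1)]`. -/
theorem stmt_14 {n : ℕ} (hn : 3 ≤ n) (θ σ α : ℝ)
    (P : (Fin n → Fin n → Bool) → ℝ)
    (hP : ∀ X, P X = Real.exp (-(hamiltonian θ σ α X))
      / ∑ Y ∈ graphConfigs n, Real.exp (-(hamiltonian θ σ α Y)))
    (i j : Fin n) (hij : i ≠ j) :
    ∑ X ∈ graphConfigs n, P X * ((X i j).toNat : ℝ)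
      = ∑ X ∈ graphConfigs n, P X *
          (1 / (Real.exp (θ
              + σ * (∑ l, if l ≠ i ∧ l ≠ j then ((X i l).toNat : ℝ) else 0)
              + σ * (∑ l, if l ≠ i ∧ l ≠ j then ((X j l).toNat : ℝ) else 0)
              - α * (∑ l, if l ≠ i ∧ l ≠ j then ((X i l).toNat : ℝ) * ((X j l).toNat : ℝ) else 0))
            + 1)) :=
  stmt_14_general θ σ α P hP i j hij
end
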